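/- Let M_a' = h(M_a) ⊂ F_2^a, where h(x) = 2^{f(x)-1} + Σ_{j=0}^{b-2} x_j 2^{2^{j+1}-1} + x_{b-1}. Then the elements of M_a' are linearly independent over F_2, so the F_2-span S of M_a' has dimension a - b, where |M_a| = a - b. -/

import Mathlib

open scoped Classical

noncomputable section

/-- `b = ⌊log₂ a⌋ + 1`. -/
def bb (a : ℕ) : ℕ := Nat.log 2 a + 1

/-- `m = 2^b - a - 1`. -/
def mm (a : ℕ) : ℕ := 2 ^ bb a - a - 1

/-- `q = a - 2^(b-1)`. -/
def qq (a : ℕ) : ℕ := a - 2 ^ (bb a - 1)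

/-- `M_a = {x : 0 < x ≤ a, x is not a power of 2}`. -/
def Ma (a : ℕ) : Set ℕ := {x | 0 < x ∧ x ≤ a ∧ ¬ ∃ k, x = 2 ^ k}

/-- `g(x) = 2x` if bit `b-1` of `x` is `0`, else `g(x) = 2x + 1 - 2^b`. -/
def gg (a x : ℕ) : ℕ := if x.testBit (bb a - 1) then 2 * x + 1 - 2 ^ bb a else 2 * x

/-- `f'(x) = x` if `x ∈ M_a`, else `f'(x) = x + 1 - 2⌈m/2⌉` (intended domain `g(M_a)`). -/
def ff' (a x : ℕ) : ℕ := if x ∈ Ma a then x else x + 1 - 2 * ((mm a + 1) / 2)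

/-- `f = f' ∘ g`. -/
def ff (a x : ℕ) : ℕ := ff' a (gg a x)

/-- the `j`-th binary digit of `x`, as a natural number. -/
def bitv (x j : ℕ) : ℕ := if x.testBit j then 1 else 0

/-- `h(x) = 2^(f(x)-1) + Σ_{j=0}^{b-2} x_j 2^(2^(j+1)-1) + x_{b-1}`. -/
def hh (a x : ℕ) : ℕ :=
  2 ^ (ff a x - 1) + (∑ j ∈ Finset.range (bb a - 1), bitv x j * 2 ^ (2 ^ (j + 1) - 1)) +
    bitv x (bb a - 1)

/-- Hamming weight of `x` viewed as a vector in `F_2^a`. -/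
def wt (a x : ℕ) : ℕ := ((Finset.range a).filter (fun j => x.testBit j)).card

/-- identification of `Z_{2^a}` with `F_2^a` via radix-2 representation. -/
def toVec (a x : ℕ) : Fin a → ZMod 2 := fun j => if x.testBit (j : ℕ) then 1 else 0

/-- `S`, the `F_2`-span of `M_a' = h(M_a)` inside `F_2^a`. -/
def Ssub (a : ℕ) : Submodule (ZMod 2) (Fin a → ZMod 2) :=
  Submodule.span (ZMod 2) (toVec a '' (hh a '' Ma a))

/-- `P_a = {0, 2^0, 2^1, …, 2^(a-1)}`. -/
def Pa (a : ℕ) : Set ℕ := {0} ∪ {y | ∃ j < a, y = 2 ^ j}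

/-- `Q_a = ∅` if `a+1` is a power of `2`, else `{1 ⊕ 2^j : a-m ≤ j ≤ a-1}`. -/
def Qa (a : ℕ) : Set ℕ :=
  if ∃ k, a + 1 = 2 ^ k then ∅ else {y | ∃ j, a - mm a ≤ j ∧ j < a ∧ y = 1 ^^^ 2 ^ j}

/-- `T_a = P_a ∪ Q_a`. -/
def Ta (a : ℕ) : Set ℕ := Pa a ∪ Qa a

end

/-! Since `f(x)` is never a power of `2`, the position `f(x) - 1` is not of the form `2^i - 1`,
while every digit term of `h(x)` sits at such a position. Hence the bit `f(x) - 1` is set in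
`h(x)` and, `f` being injective on `M_a`, in no other `h(y)`: each vector of `M_a'` owns a
coordinate on which all the others vanish, which forces linear independence. The count
`|M_a| = a - b` holds because the powers of `2` in `[1, a]` are `2^0, …, 2^(b-1)`. -/

open Finset

theorem Nat.testBit_sum_two_pow (s : Finset ℕ) (k : ℕ) :
    (∑ i ∈ s, 2 ^ i).testBit k ↔ k ∈ s := by
  rw [← Nat.mem_bitIndices, ← List.mem_toFinset, toFinset_bitIndices_sum_two_pow]

theorem linearIndependent_of_forall_exists_apply_ne_zero {ι κ R : Type*} [Ring R]
    [NoZeroDivisors R] (v : ι → κ → R) (hv : ∀ i, ∃ k, v i k ≠ 0 ∧ ∀ j ≠ i, v j k = 0) :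
    LinearIndependent R v := by
  rw [linearIndependent_iff']
  intro s g hsum i hi
  obtain ⟨k, hik, hjk⟩ := hv i
  have hk := congrFun hsum k
  simp only [Finset.sum_apply, Pi.smul_apply, smul_eq_mul, Pi.zero_apply] at hk
  rw [Finset.sum_eq_single_of_mem i hi fun j _ hj => by rw [hjk j hj, mul_zero]] at hk
  exact (mul_eq_zero.mp hk).resolve_right hik

lemma not_exists_eq_two_pow_of_odd {n : ℕ} (hodd : n % 2 = 1) (hn : n ≠ 1) :
    ¬ ∃ k, n = 2 ^ k := by
  rintro ⟨_ | k, rfl⟩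
  · exact hn rfl
  · simp [pow_succ] at hodd

lemma not_exists_two_mul_eq_two_pow {x : ℕ} (hx : ¬ ∃ k, x = 2 ^ k) :
    ¬ ∃ k, 2 * x = 2 ^ k := by
  rintro ⟨_ | k, hk⟩
  · omega
  · exact hx ⟨k, by rw [pow_succ] at hk; omega⟩

lemma sum_bitv_mul_two_pow {s : Finset ℕ} {p : ℕ → ℕ} (hp : Set.InjOn p s) (x : ℕ) :
    ∑ j ∈ s, bitv x j * 2 ^ p j = ∑ i ∈ (s.filter fun j => x.testBit j).image p, 2 ^ i := by
  rw [sum_image (hp.mono (coe_subset.mpr (filter_subset _ s))), sum_filter]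
  refine sum_congr rfl fun j _ => ?_
  simp [bitv]

lemma sum_range_add_bitv_eq_sum_range_succ (x n : ℕ) :
    (∑ j ∈ range n, bitv x j * 2 ^ (2 ^ (j + 1) - 1)) + bitv x n =
      ∑ j ∈ range (n + 1), bitv x j * 2 ^ (2 ^ ((j + 1) % (n + 1)) - 1) := by
  rw [sum_range_succ, Nat.mod_self, pow_zero, Nat.sub_self, pow_zero, mul_one]
  congr 1
  refine sum_congr rfl fun j hj => ?_
  rw [Nat.mod_eq_of_lt (by rw [mem_range] at hj; omega)]

lemma injOn_two_pow_succ_mod_sub_one (n : ℕ) :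
    Set.InjOn (fun j => 2 ^ ((j + 1) % (n + 1)) - 1) (range (n + 1)) := by
  intro i hi j hj h
  have h' : (i + 1) % (n + 1) = (j + 1) % (n + 1) := by
    refine Nat.pow_right_injective le_rfl ?_
    have := @Nat.one_le_two_pow ((i + 1) % (n + 1))
    have := @Nat.one_le_two_pow ((j + 1) % (n + 1))
    simp only at h ⊢
    omega
  exact Nat.ModEq.eq_of_lt_of_lt (Nat.ModEq.add_right_cancel' 1 h') (by simpa using hi)
    (by simpa using hj)

section
variable {a x y k : ℕ}

lemma finite_Ma : (Ma a).Finite := (Set.finite_Icc 1 a).subset fun _ hx => ⟨hx.1, hx.2.1⟩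

lemma two_pow_bb : 2 ^ bb a = 2 * 2 ^ Nat.log 2 a := pow_succ' 2 _

lemma lt_two_mul_two_pow_log : a < 2 * 2 ^ Nat.log 2 a :=
  two_pow_bb (a := a) ▸ Nat.lt_pow_succ_log_self one_lt_two a

lemma mm_add_add_one : mm a + a + 1 = 2 * 2 ^ Nat.log 2 a := by
  have := lt_two_mul_two_pow_log (a := a)
  rw [mm, two_pow_bb]
  omega

lemma two_pow_log_le_of_mem_Ma (hx : x ∈ Ma a) : 2 ^ Nat.log 2 a ≤ a :=
  Nat.pow_log_le_self 2 (by have := hx.1; have := hx.2.1; omega)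

lemma ff_cases (hx : x ∈ Ma a) :
    (2 * x ≤ a ∧ ff a x = 2 * x) ∨
    (a < 2 * x ∧ x < 2 ^ Nat.log 2 a ∧ ff a x + 2 * ((mm a + 1) / 2) = 2 * x + 1) ∨
    (2 ^ Nat.log 2 a < x ∧ ff a x + 2 * 2 ^ Nat.log 2 a = 2 * x + 1) := by
  have hlo := two_pow_log_le_of_mem_Ma hx
  have hhi := lt_two_mul_two_pow_log (a := a)
  have hmm := mm_add_add_one (a := a)
  obtain ⟨hx0, hxa, hxpow⟩ := hx
  unfold ff ff' gg
  rw [show bb a - 1 = Nat.log 2 a from rfl, two_pow_bb]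
  by_cases htop : 2 ^ Nat.log 2 a ≤ x
  · have hbit : x.testBit (Nat.log 2 a) = true :=
      Nat.testBit_of_two_pow_le_and_two_pow_add_one_gt htop (by rw [pow_succ]; omega)
    have hne : x ≠ 2 ^ Nat.log 2 a := fun h => hxpow ⟨_, h⟩
    have hmem : 2 * x + 1 - 2 * 2 ^ Nat.log 2 a ∈ Ma a :=
      ⟨by omega, by omega, not_exists_eq_two_pow_of_odd (by omega) (by omega)⟩
    right; right
    rw [if_pos hbit, if_pos hmem]
    omega
  · have hbit : x.testBit (Nat.log 2 a) = false := Nat.testBit_lt_two_pow (by omega)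
    rw [hbit, if_neg Bool.false_ne_true]
    by_cases hle : 2 * x ≤ a
    · left
      exact ⟨hle, if_pos ⟨by omega, hle, not_exists_two_mul_eq_two_pow hxpow⟩⟩
    · right; left
      rw [if_neg fun h => hle h.2.1]
      omega

lemma mapsTo_ff : Set.MapsTo (ff a) (Ma a) (Ma a) := by
  intro x hx
  have hlo := two_pow_log_le_of_mem_Ma hx
  have hmm := mm_add_add_one (a := a)
  rcases ff_cases hx with ⟨h1, hf⟩ | ⟨h1, h2, hf⟩ | ⟨h1, hf⟩ <;>
    obtain ⟨hx0, hxa, hxpow⟩ := hx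
  · exact ⟨by omega, by omega, hf ▸ not_exists_two_mul_eq_two_pow hxpow⟩
  · exact ⟨by omega, by omega, not_exists_eq_two_pow_of_odd (by omega) (by omega)⟩
  · exact ⟨by omega, by omega, not_exists_eq_two_pow_of_odd (by omega) (by omega)⟩

lemma injOn_ff : Set.InjOn (ff a) (Ma a) := by
  intro x hx y hy h
  have hxa := hx.2.1
  have hya := hy.2.1
  have hlo := two_pow_log_le_of_mem_Ma hx
  have hmm := mm_add_add_one (a := a)
  rcases ff_cases hx with ⟨-, hfx⟩ | ⟨hx1, hx2, hfx⟩ | ⟨hx1, hfx⟩ <;>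
    rcases ff_cases hy with ⟨-, hfy⟩ | ⟨hy1, hy2, hfy⟩ | ⟨hy1, hfy⟩ <;>
    omega

/-- `h(x) - 2^(f(x)-1)` is the sum of `2^i` over this set: the digit `x_j` sits at position
`2^((j+1) mod b) - 1`, the top digit `x_(b-1)` wrapping around to position `0`. -/
def hhDigitSupport (a x : ℕ) : Finset ℕ :=
  ((range (bb a)).filter fun j => x.testBit j).image fun j => 2 ^ ((j + 1) % bb a) - 1

lemma exists_add_one_eq_two_pow_of_mem_hhDigitSupport (hk : k ∈ hhDigitSupport a x) :
    ∃ i, k + 1 = 2 ^ i := by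
  obtain ⟨j, -, rfl⟩ := mem_image.mp hk
  exact ⟨_, Nat.sub_add_cancel Nat.one_le_two_pow⟩

lemma hh_eq_sum_two_pow (hx : ff a x ∈ Ma a) :
    hh a x = ∑ i ∈ insert (ff a x - 1) (hhDigitSupport a x), 2 ^ i := by
  have hnot : ff a x - 1 ∉ hhDigitSupport a x := fun h => by
    obtain ⟨i, hi⟩ := exists_add_one_eq_two_pow_of_mem_hhDigitSupport h
    exact hx.2.2 ⟨i, by have := hx.1; omega⟩
  rw [sum_insert hnot, hh, add_assoc, hhDigitSupport]
  obtain ⟨n, hn⟩ : ∃ n, bb a = n + 1 := ⟨_, rfl⟩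
  rw [hn, Nat.add_sub_cancel, sum_range_add_bitv_eq_sum_range_succ,
    sum_bitv_mul_two_pow (injOn_two_pow_succ_mod_sub_one n)]

lemma testBit_hh_iff (hx : ff a x ∈ Ma a) (hk : ¬ ∃ i, k + 1 = 2 ^ i) :
    (hh a x).testBit k ↔ k = ff a x - 1 := by
  rw [hh_eq_sum_two_pow hx, Nat.testBit_sum_two_pow, mem_insert]
  exact or_iff_left fun h => hk (exists_add_one_eq_two_pow_of_mem_hhDigitSupport h)

lemma testBit_hh_ff_sub_one (hx : x ∈ Ma a) (hy : y ∈ Ma a) :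
    (hh a y).testBit (ff a x - 1) = decide (x = y) := by
  have hfx := mapsTo_ff hx
  have hfy := mapsTo_ff hy
  rw [Bool.eq_iff_iff, testBit_hh_iff hfy fun ⟨i, hi⟩ => hfx.2.2 ⟨i, by have := hfx.1; omega⟩,
    decide_eq_true_iff]
  constructor
  · intro h
    exact injOn_ff hx hy (by have := hfx.1; have := hfy.1; omega)
  · rintro rfl
    rfl

lemma injOn_hh : Set.InjOn (hh a) (Ma a) := by
  intro x hx y hy h
  have := testBit_hh_ff_sub_one hx hy
  rw [← h, testBit_hh_ff_sub_one hx hx] at this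
  simpa using this

lemma linearIndependent_toVec_image_hh :
    LinearIndependent (ZMod 2) (fun y : (hh a '' Ma a : Set ℕ) => toVec a y) := by
  refine linearIndependent_of_forall_exists_apply_ne_zero _ ?_
  rintro ⟨_, x, hx, rfl⟩
  have hf := mapsTo_ff hx
  refine ⟨⟨ff a x - 1, by have := hf.1; have := hf.2.1; omega⟩, ?_, ?_⟩
  · simp [toVec, testBit_hh_ff_sub_one hx hx]
  · rintro ⟨_, y, hy, rfl⟩ hne
    have hxy : x ≠ y := by rintro rfl; exact hne rfl
    simp [toVec, testBit_hh_ff_sub_one hx hy, hxy]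

lemma Ma_eq_Icc_sdiff_image_two_pow (ha : a ≠ 0) :
    Ma a = ↑(Icc 1 a \ (range (bb a)).image (2 ^ ·)) := by
  ext x
  simp only [coe_sdiff, coe_Icc, coe_image, coe_range]
  constructor
  · rintro ⟨hx0, hxa, hpow⟩
    refine ⟨⟨hx0, hxa⟩, ?_⟩
    rintro ⟨k, -, rfl⟩
    exact hpow ⟨k, rfl⟩
  · rintro ⟨⟨hx0, hxa⟩, hpow⟩
    refine ⟨hx0, hxa, ?_⟩
    rintro ⟨k, rfl⟩
    refine hpow ⟨k, ?_, rfl⟩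
    have := (Nat.le_log_iff_pow_le one_lt_two ha).mpr hxa
    rw [Set.mem_Iio, bb]
    omega

lemma ncard_Ma (a : ℕ) : (Ma a).ncard = a - bb a := by
  rcases eq_or_ne a 0 with rfl | ha
  · rw [Nat.zero_sub, Set.ncard_eq_zero finite_Ma]
    exact Set.eq_empty_of_forall_notMem fun x ⟨hx0, hx, _⟩ => by omega
  rw [Ma_eq_Icc_sdiff_image_two_pow ha, Set.ncard_coe_finset, card_sdiff_of_subset,
    card_image_of_injective _ (Nat.pow_right_injective le_rfl), card_range, Nat.card_Icc,
    Nat.add_sub_cancel]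
  intro y hy
  obtain ⟨k, hk, rfl⟩ := mem_image.mp hy
  refine mem_Icc.mpr ⟨Nat.one_le_two_pow, (Nat.le_log_iff_pow_le one_lt_two ha).mp ?_⟩
  rw [mem_range, bb] at hk
  omega

end

theorem Ma'_linearIndependent_general (a : ℕ) :
    LinearIndependent (ZMod 2) (fun y : (hh a '' Ma a : Set ℕ) => toVec a (y : ℕ)) ∧
    Module.finrank (ZMod 2) (Ssub a) = a - bb a ∧
    (Ma a).ncard = a - bb a := by
  have hLI := linearIndependent_toVec_image_hh (a := a)
  have : Fintype (hh a '' Ma a) := (finite_Ma.image _).fintype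
  refine ⟨hLI, ?_, ncard_Ma a⟩
  rw [Ssub, Set.image_eq_range, finrank_span_eq_card hLI, ← Nat.card_eq_fintype_card,
    Nat.card_coe_set_eq, injOn_hh.ncard_image, ncard_Ma]

/-- the elements of `M_a' = h(M_a)`, viewed in `F_2^a`, are linearly
independent over `F_2`, the span `S` has dimension `a - b`, and `|M_a| = a - b`. -/
theorem Ma'_linearIndependent (a : ℕ) (ha : 2 ≤ a) :
    LinearIndependent (ZMod 2) (fun y : (hh a '' Ma a : Set ℕ) => toVec a (y : ℕ)) ∧
    Module.finrank (ZMod 2) (Ssub a) = a - bb a ∧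
    (Ma a).ncard = a - bb a :=
  Ma'_linearIndependent_general a
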